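/- arXiv:math/0412293 — 2 statements merged into one kernel-verified Lean document; each statement's English description precedes it below -/
import Mathlib

section
/- Let K be a field, let A : ℤ → K satisfy A h ≠ 0 for all h, and suppose there are λ, μ ∈ K such that A(h−2)·A(h+2) = λ·A(h−1)·A(h+1) + μ·A(h)² for all h ∈ ℤ (i.e., A is a Somos 4 sequence). Then for every integer m ≥ 2 there exist constants a, b ∈ K such that A(h−m)·A(h+m+1) = a·A(h−1)·A(h+2) + b·A(h)·A(h+1) for all h ∈ ℤ; that is, A is a three-term Somos 2m+1 sequence for every m ≥ 2. -/
/-!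
Write `B n h = A (h - n) * A (h + n + 1)`, so that `t = B 1` and `u = B 0` are the two products
on the right of the Somos 2m+1 relation, and note
`B (n + 1) h * B (n - 1) h = B n (h - 1) * B n (h + 1)`.
The Somos 4 recurrence makes two ratios shift-invariant, hence constant: this gives the Somos 5
relation `B 2 = -μ t + β u` and a cross relation, which together express
`B n (h - 1) * B n (h + 1)` as a binary quadratic form `Q_{a,b}(t h, u h)` whenever
`B n = a t + b u`. If moreover `B (n - 1) = a' t + b' u`, then `B (n + 1)` is linear in `t, u`
as soon as `a' t + b' u` divides `Q_{a,b}`, i.e. `Q_{a,b}(b', -a') = 0`. This condition is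
symmetric in `(a, b)` and `(a', b')`, and the cofactor `c t + d u` vanishes at the second root
`(d, -c)` of `Q_{a,b}`, so the condition passes from the pair `(B (n - 1), B n)` to
`(B n, B (n + 1))`, and induction on `n` applies.
-/

section BinaryQuadraticForm

variable {K : Type*} [Field K]

theorem exists_linear_factor_of_eval_eq_zero {p q r a b : K} (hab : a ≠ 0 ∨ b ≠ 0)
    (h : p * b ^ 2 - q * a * b + r * a ^ 2 = 0) :
    ∃ c d : K, ∀ t u : K,
      p * t ^ 2 + q * t * u + r * u ^ 2 = (c * t + d * u) * (a * t + b * u) := by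
  by_cases ha : a = 0
  · subst ha
    have hb : b ≠ 0 := hab.resolve_left (not_not.mpr rfl)
    have hp : p = 0 := by simpa [hb] using h
    refine ⟨q / b, r / b, fun t u => ?_⟩
    subst hp
    field_simp
    ring
  · refine ⟨p / a, (q - p * b / a) / a, fun t u => ?_⟩
    field_simp
    linear_combination u ^ 2 * h

def somosQuad (μ β δ a b t u : K) : K :=
  -(a * b) * t ^ 2 + (b ^ 2 + a * b * δ - a ^ 2 * μ) * t * u + (a ^ 2 * β + a * b * μ) * u ^ 2

theorem somosQuad_swap (μ β δ a b a' b' : K) :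
    somosQuad μ β δ a b b' (-a') = somosQuad μ β δ a' b' b (-a) := by
  unfold somosQuad
  ring

theorem exists_somosQuad_factor {μ β δ a b a' b' : K} (hv : a' ≠ 0 ∨ b' ≠ 0)
    (h : somosQuad μ β δ a b b' (-a') = 0) :
    ∃ c d : K, (∀ t u : K, somosQuad μ β δ a b t u = (c * t + d * u) * (a' * t + b' * u)) ∧
      somosQuad μ β δ c d b (-a) = 0 := by
  obtain ⟨c, d, hfac⟩ := exists_linear_factor_of_eval_eq_zero
    (p := -(a * b)) (q := b ^ 2 + a * b * δ - a ^ 2 * μ) (r := a ^ 2 * β + a * b * μ) hv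
    (by unfold somosQuad at h; linear_combination h)
  refine ⟨c, d, hfac, ?_⟩
  rw [← somosQuad_swap, somosQuad, hfac]
  ring

end BinaryQuadraticForm

section SomosSequence

variable {K : Type*} [Field K]

theorem exists_eq_const_mul_of_ratio_periodic {f g : ℤ → K}
    (hg : ∀ h, g h ≠ 0) (hfg : ∀ h, f (h + 1) * g h = f h * g (h + 1)) :
    ∃ c : K, ∀ h, f h = c * g h := by
  have hper : Function.Periodic (fun h => f h / g h) 1 := fun h => by
    rw [div_eq_div_iff (hg _) (hg _), hfg]
  refine ⟨f 0 / g 0, fun h => ?_⟩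
  have hh : f h / g h = f 0 / g 0 := by simpa using hper.int_mul_eq h
  rw [← hh, div_mul_cancel₀ _ (hg h)]

def IsSomos4 (A : ℤ → K) (lam mu : K) : Prop :=
  ∀ h : ℤ, A (h - 2) * A (h + 2) = lam * (A (h - 1) * A (h + 1)) + mu * (A h) ^ 2

def symProd (A : ℤ → K) (n h : ℤ) : K := A (h - n) * A (h + n + 1)

theorem symProd_zero (A : ℤ → K) (h : ℤ) : symProd A 0 h = A h * A (h + 1) := by
  simp [symProd]

theorem symProd_one (A : ℤ → K) (h : ℤ) : symProd A 1 h = A (h - 1) * A (h + 2) := by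
  simp only [symProd]; ring_nf

theorem symProd_ne_zero {A : ℤ → K} (hA : ∀ h, A h ≠ 0) (n h : ℤ) : symProd A n h ≠ 0 :=
  mul_ne_zero (hA _) (hA _)

theorem symProd_add_one_mul_symProd_sub_one (A : ℤ → K) (n h : ℤ) :
    symProd A (n + 1) h * symProd A (n - 1) h = symProd A n (h - 1) * symProd A n (h + 1) := by
  simp only [symProd]; ring_nf

namespace IsSomos4

variable {A : ℤ → K} {lam mu : K}

theorem exists_symProd_two_eq (hS : IsSomos4 A lam mu) (hA : ∀ h, A h ≠ 0) :
    ∃ β : K, ∀ h, symProd A 2 h = -mu * symProd A 1 h + β * symProd A 0 h := by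
  obtain ⟨β, hβ⟩ := exists_eq_const_mul_of_ratio_periodic (symProd_ne_zero hA 0)
    (f := fun h => symProd A 2 h + mu * symProd A 1 h) fun h => by
      simp only [symProd]
      linear_combination (norm := ring_nf)
        (A (h - 1) * A (h + 1)) * hS (h + 2) - (A (h + 1) * A (h + 3)) * hS h
  exact ⟨β, fun h => by linear_combination hβ h⟩

theorem exists_symProd_cross (hS : IsSomos4 A lam mu) (hA : ∀ h, A h ≠ 0) :
    ∃ δ : K, ∀ h,
      symProd A 1 (h - 1) * symProd A 0 (h + 1) + symProd A 0 (h - 1) * symProd A 1 (h + 1)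
        = -symProd A 1 h ^ 2 + δ * (symProd A 1 h * symProd A 0 h) + mu * symProd A 0 h ^ 2 := by
  obtain ⟨δ, hδ⟩ := exists_eq_const_mul_of_ratio_periodic
    (fun h => mul_ne_zero (symProd_ne_zero hA 1 h) (symProd_ne_zero hA 0 h))
    (f := fun h => symProd A 1 (h - 1) * symProd A 0 (h + 1)
      + symProd A 0 (h - 1) * symProd A 1 (h + 1) + symProd A 1 h ^ 2 - mu * symProd A 0 h ^ 2)
    fun h => by
      simp only [symProd]
      linear_combination (norm := ring_nf)
        (A (h - 1) * A h * A (h + 1) ^ 3 * A (h + 2)) * hS (h + 2)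
          - (A h * A (h + 1) ^ 3 * A (h + 2) * A (h + 3)) * hS h
  exact ⟨δ, fun h => by linear_combination hδ h⟩

theorem exists_symProd_mul_eq_somosQuad (hS : IsSomos4 A lam mu) (hA : ∀ h, A h ≠ 0) :
    ∃ β δ : K, ∀ (n : ℤ) (a b : K),
      (∀ h, symProd A n h = a * symProd A 1 h + b * symProd A 0 h) →
      ∀ h, symProd A (n + 1) h * symProd A (n - 1) h
        = somosQuad mu β δ a b (symProd A 1 h) (symProd A 0 h) := by
  obtain ⟨β, hβ⟩ := hS.exists_symProd_two_eq hA
  obtain ⟨δ, hδ⟩ := hS.exists_symProd_cross hA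
  refine ⟨β, δ, fun n a b hn h => ?_⟩
  have htt : symProd A 1 (h - 1) * symProd A 1 (h + 1) = symProd A 2 h * symProd A 0 h := by
    simp only [symProd]; ring_nf
  have huu : symProd A 0 (h - 1) * symProd A 0 (h + 1) = symProd A 1 h * symProd A 0 h := by
    simp only [symProd]; ring_nf
  rw [symProd_add_one_mul_symProd_sub_one, hn, hn, somosQuad]
  linear_combination a ^ 2 * htt + a ^ 2 * symProd A 0 h * hβ h + a * b * hδ h + b ^ 2 * huu

theorem exists_symProd_eq (hS : IsSomos4 A lam mu) (hA : ∀ h, A h ≠ 0) {n : ℤ}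
    (hn : 0 ≤ n) :
    ∃ a b : K, ∀ h, symProd A n h = a * symProd A 1 h + b * symProd A 0 h := by
  obtain ⟨β, δ, hQ⟩ := hS.exists_symProd_mul_eq_somosQuad hA
  suffices key : ∃ a' b' a b : K,
      (∀ h, symProd A n h = a' * symProd A 1 h + b' * symProd A 0 h) ∧
      (∀ h, symProd A (n + 1) h = a * symProd A 1 h + b * symProd A 0 h) ∧
      somosQuad mu β δ a b b' (-a') = 0 by
    obtain ⟨a, b, -, -, hrep, -, -⟩ := key
    exact ⟨a, b, hrep⟩
  induction n, hn using Int.leInduction with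
  | base => exact ⟨0, 1, 1, 0, by simp, by simp, by simp [somosQuad]⟩
  | succ n _ ih =>
    obtain ⟨a', b', a, b, hprev, hcur, hinv⟩ := ih
    have hv : a' ≠ 0 ∨ b' ≠ 0 := by
      by_contra! h0
      exact symProd_ne_zero hA n 0 (by simp [hprev, h0])
    obtain ⟨c, d, hfac, hinv'⟩ := exists_somosQuad_factor hv hinv
    refine ⟨a, b, c, d, hcur, fun h => mul_right_cancel₀ (symProd_ne_zero hA n h) ?_, hinv'⟩
    have hnext := hQ (n + 1) a b hcur h
    rw [add_sub_cancel_right] at hnext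
    rw [hnext, hfac, hprev]

end IsSomos4

end SomosSequence

theorem somos4_is_somos_odd {K : Type*} [Field K] (A : ℤ → K)
    (hA : ∀ h : ℤ, A h ≠ 0) (lam mu : K)
    (hrec : ∀ h : ℤ, A (h - 2) * A (h + 2) = lam * (A (h - 1) * A (h + 1)) + mu * (A h) ^ 2) :
    ∀ m : ℤ, 2 ≤ m → ∃ a b : K,
      ∀ h : ℤ, A (h - m) * A (h + m + 1) =
        a * (A (h - 1) * A (h + 2)) + b * (A h * A (h + 1)) := by
  intro m hm
  obtain ⟨a, b, hab⟩ := IsSomos4.exists_symProd_eq hrec hA (n := m) (by omega)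
  refine ⟨a, b, fun h => ?_⟩
  rw [← symProd_one, ← symProd_zero]
  exact hab h
end

section
/- Let K be a field, let B : ℤ → K satisfy B h ≠ 0 for all h, and suppose there are λ, μ ∈ K such that B(h−2)·B(h+3) = λ·B(h−1)·B(h+2) + μ·B(h)·B(h+1) for all h ∈ ℤ (i.e., B is a Somos 5 sequence). Then for every integer m ≥ 2 there exist constants a, b ∈ K such that B(h−m)·B(h+m+1) = a·B(h−1)·B(h+2) + b·B(h)·B(h+1) for all h ∈ ℤ; that is, a Somos 5 is a three-term Somos k for every odd k = 7, 9, 11, …. -/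
/-!
Write `S m h = B (h - m) * B (h + m + 1)`, so that `X = S 1` and `Y = S 0` are the two sequences
on the right; the Somos 5 recurrence is the case `m = 2`. Along a Somos 5 sequence the ratio
`somos5Invariant` is constant, and with it the identity
`S (m + 2) h * S m h = S (m + 1) (h - 1) * S (m + 1) (h + 1)` turns `S (m + 2) * S m` into a
binary quadratic form `Q_u (X, Y)` as soon as `S (m + 1) = u • (X, Y)`. If moreover
`S m = v • (X, Y)` and `Q_u` vanishes at `v⊥`, then `Q_u` is `v • (X, Y)` times a linear form
`w • (X, Y)`, and cancelling `S m ≠ 0` gives `S (m + 2) = w • (X, Y)`. The vanishing condition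
propagates to the pair `(w, u)` because `Φ(u, v) = Q_u (v⊥)` is symmetric and `Φ(u, w) = 0`.
-/

section

variable {K : Type*} [Field K]

theorem exists_quadratic_eq_mul_of_eval_eq_zero {c₀ c₁ c₂ p q : K} (hpq : p ≠ 0 ∨ q ≠ 0)
    (hroot : c₀ * q ^ 2 + c₁ * q * (-p) + c₂ * (-p) ^ 2 = 0) :
    ∃ r s : K, ∀ X Y : K,
      c₀ * X ^ 2 + c₁ * X * Y + c₂ * Y ^ 2 = (p * X + q * Y) * (r * X + s * Y) := by
  rcases hpq with hp | hq
  · refine ⟨c₀ / p, (c₁ * p - c₀ * q) / p ^ 2, fun X Y => ?_⟩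
    field_simp
    linear_combination Y ^ 2 * hroot
  · refine ⟨(c₁ * q - c₂ * p) / q ^ 2, c₂ / q, fun X Y => ?_⟩
    field_simp
    linear_combination X ^ 2 * hroot

def IsThreeTermSomos (B : ℤ → K) (m : ℤ) (a b : K) : Prop :=
  ∀ h : ℤ, B (h - m) * B (h + m + 1) = a * (B (h - 1) * B (h + 2)) + b * (B h * B (h + 1))

theorem isThreeTermSomos_zero (B : ℤ → K) : IsThreeTermSomos B 0 0 1 := by
  intro h
  simp

theorem isThreeTermSomos_one (B : ℤ → K) : IsThreeTermSomos B 1 1 0 := by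
  intro h
  rw [add_assoc]
  norm_num

theorem isThreeTermSomos_two_iff {B : ℤ → K} {lam mu : K} :
    IsThreeTermSomos B 2 lam mu ↔
      ∀ h, B (h - 2) * B (h + 3) = lam * (B (h - 1) * B (h + 2)) + mu * (B h * B (h + 1)) := by
  refine forall_congr' fun h => ?_
  rw [add_assoc]
  norm_num

theorem IsThreeTermSomos.ne_zero_or_ne_zero {B : ℤ → K} (hB : ∀ h, B h ≠ 0) {m : ℤ}
    {a b : K} (hS : IsThreeTermSomos B m a b) : a ≠ 0 ∨ b ≠ 0 := by
  by_contra! hab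
  have := hS 0
  simp [hab.1, hab.2, hB] at this

def somos5Invariant (B : ℤ → K) (lam : K) (h : ℤ) : K :=
  (B (h - 2) * B (h + 1) * (B (h + 1) * B (h + 2)) + B (h - 1) * B h * (B h * B (h + 3)) +
      (B (h - 1) * B (h + 2)) ^ 2 + lam * (B h * B (h + 1)) ^ 2) /
    (B (h - 1) * B (h + 2) * (B h * B (h + 1)))

theorem somos5Invariant_add_one {B : ℤ → K} (hB : ∀ h, B h ≠ 0) {lam mu : K}
    (hrec : IsThreeTermSomos B 2 lam mu) (h : ℤ) :
    somos5Invariant B lam (h + 1) = somos5Invariant B lam h := by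
  have rec₀ := isThreeTermSomos_two_iff.1 hrec h
  have rec₁ := isThreeTermSomos_two_iff.1 hrec (h + 1)
  unfold somos5Invariant
  rw [div_eq_div_iff (by simp [hB]) (by simp [hB])]
  rw [show h + 1 - 2 = h - 1 by ring, show h + 1 - 1 = h by ring, show h + 1 + 1 = h + 2 by ring,
    show h + 1 + 2 = h + 3 by ring, show h + 1 + 3 = h + 4 by ring] at rec₁ ⊢
  linear_combination (-(B h * B (h + 1) ^ 3 * B (h + 2) ^ 2)) * rec₀ +
    (B h ^ 2 * B (h + 1) ^ 3 * B (h + 2)) * rec₁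

theorem somos5Invariant_eq {B : ℤ → K} (hB : ∀ h, B h ≠ 0) {lam mu : K}
    (hrec : IsThreeTermSomos B 2 lam mu) (h : ℤ) :
    somos5Invariant B lam h = somos5Invariant B lam 0 := by
  have hper : Function.Periodic (somos5Invariant B lam) 1 := somos5Invariant_add_one hB hrec
  simpa using hper.int_mul h 0

/-- `S (m + 2) * S m = Q_u (X, Y)` when `S (m + 1) = u • (X, Y)`, where `I` is the invariant. -/
def somos5Form (lam mu I a b X Y : K) : K :=
  -(a * b) * X ^ 2 + (lam * a ^ 2 + I * a * b + b ^ 2) * X * Y + (mu * a ^ 2 - lam * a * b) * Y ^ 2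

/-- `Φ(u, v) = Q_u (v⊥)` for `u = (a, b)`, `v = (a', b')`; it is symmetric in `u` and `v`. -/
def somos5Pairing (lam mu I a b a' b' : K) : K :=
  somos5Form lam mu I a b b' (-a')

theorem somos5Pairing_comm (lam mu I a b a' b' : K) :
    somos5Pairing lam mu I a b a' b' = somos5Pairing lam mu I a' b' a b := by
  unfold somos5Pairing somos5Form
  ring

theorem mul_eq_somos5Form_of_isThreeTermSomos {B : ℤ → K} (hB : ∀ h, B h ≠ 0) {lam mu I : K}
    (hrec : IsThreeTermSomos B 2 lam mu) (hI : ∀ h, somos5Invariant B lam h = I)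
    {n : ℤ} {a b : K} (hS : IsThreeTermSomos B (n + 1) a b) (h : ℤ) :
    B (h - (n + 2)) * B (h + (n + 2) + 1) * (B (h - n) * B (h + n + 1)) =
      somos5Form lam mu I a b (B (h - 1) * B (h + 2)) (B h * B (h + 1)) := by
  have rec₀ := isThreeTermSomos_two_iff.1 hrec h
  have hS_pred : B (h - (n + 2)) * B (h + n + 1) =
      a * (B (h - 2) * B (h + 1)) + b * (B (h - 1) * B h) := by
    have := hS (h - 1); ring_nf at this ⊢; exact this
  have hS_succ : B (h - n) * B (h + (n + 2) + 1) =
      a * (B h * B (h + 3)) + b * (B (h + 1) * B (h + 2)) := by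
    have := hS (h + 1); ring_nf at this ⊢; exact this
  have hI_h := hI h
  unfold somos5Invariant at hI_h
  rw [div_eq_iff (by simp [hB])] at hI_h
  rw [show B (h - (n + 2)) * B (h + (n + 2) + 1) * (B (h - n) * B (h + n + 1)) =
      (B (h - (n + 2)) * B (h + n + 1)) * (B (h - n) * B (h + (n + 2) + 1)) by ring,
    hS_pred, hS_succ]
  unfold somos5Form
  linear_combination a ^ 2 * (B h * B (h + 1)) * rec₀ + a * b * hI_h

theorem exists_isThreeTermSomos_add_two {B : ℤ → K} (hB : ∀ h, B h ≠ 0) {lam mu I : K}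
    (hrec : IsThreeTermSomos B 2 lam mu) (hI : ∀ h, somos5Invariant B lam h = I)
    {n : ℤ} {a' b' a b : K} (hS₀ : IsThreeTermSomos B n a' b')
    (hS₁ : IsThreeTermSomos B (n + 1) a b) (hpair : somos5Pairing lam mu I a b a' b' = 0) :
    ∃ r s : K, IsThreeTermSomos B (n + 2) r s ∧ somos5Pairing lam mu I r s a b = 0 := by
  obtain ⟨r, s, hfactor⟩ :=
    exists_quadratic_eq_mul_of_eval_eq_zero (hS₀.ne_zero_or_ne_zero hB) hpair
  refine ⟨r, s, fun h => ?_, ?_⟩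
  · apply mul_right_cancel₀ (mul_ne_zero (hB (h - n)) (hB (h + n + 1)))
    rw [mul_eq_somos5Form_of_isThreeTermSomos hB hrec hI hS₁ h, somos5Form, hfactor, hS₀ h]
    ring
  · rw [somos5Pairing_comm, somos5Pairing, somos5Form, hfactor]
    ring

theorem exists_isThreeTermSomos_of_nonneg {B : ℤ → K} (hB : ∀ h, B h ≠ 0) {lam mu : K}
    (hrec : IsThreeTermSomos B 2 lam mu) {m : ℤ} (hm : 0 ≤ m) :
    ∃ a b : K, IsThreeTermSomos B m a b := by
  suffices ∃ a' b' a b : K, IsThreeTermSomos B m a' b' ∧ IsThreeTermSomos B (m + 1) a b ∧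
      somos5Pairing lam mu (somos5Invariant B lam 0) a b a' b' = 0 by
    obtain ⟨a', b', -, -, hS, -, -⟩ := this
    exact ⟨a', b', hS⟩
  induction m, hm using Int.leInduction with
  | base =>
    refine ⟨0, 1, 1, 0, isThreeTermSomos_zero B, isThreeTermSomos_one B, ?_⟩
    simp [somos5Pairing, somos5Form]
  | succ m _ ih =>
    obtain ⟨a', b', a, b, hS₀, hS₁, hpair⟩ := ih
    obtain ⟨r, s, hS₂, hpair'⟩ :=
      exists_isThreeTermSomos_add_two hB hrec (somos5Invariant_eq hB hrec) hS₀ hS₁ hpair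
    exact ⟨a, b, r, s, hS₁, by rwa [add_assoc, one_add_one_eq_two], hpair'⟩

end

theorem somos5_is_somos_odd {K : Type*} [Field K] (B : ℤ → K)
    (hB : ∀ h : ℤ, B h ≠ 0) (lam mu : K)
    (hrec : ∀ h : ℤ, B (h - 2) * B (h + 3) =
      lam * (B (h - 1) * B (h + 2)) + mu * (B h * B (h + 1))) :
    ∀ m : ℤ, 2 ≤ m → ∃ a b : K,
      ∀ h : ℤ, B (h - m) * B (h + m + 1) =
        a * (B (h - 1) * B (h + 2)) + b * (B h * B (h + 1)) := by
  exact fun m hm =>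
    exists_isThreeTermSomos_of_nonneg hB (isThreeTermSomos_two_iff.2 hrec) (by omega)
end
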